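/- arXiv:1211.3445 — 7 statements merged into one kernel-verified Lean document; each statement's English description precedes it below -/
import Mathlib

section
/- Let A be a ring, and let X and Y be non-isomorphic A-modules whose endomorphism rings are local. If ψ : X → X is an A-linear endomorphism that factors through Y, then ψ is not an automorphism of X. -/
/-- In a local ring, an idempotent is 0 or 1. -/
lemma idem_aux {R : Type*} [Ring R] [IsLocalRing R] {e : R} (he : e * e = e) :
    e = 0 ∨ e = 1 := by
  rcases IsLocalRing.isUnit_or_isUnit_of_add_one (add_sub_cancel e 1) with h | h
  · right
    rcases h with ⟨u, rfl⟩
    have := congrArg (fun x => (↑u⁻¹ : R) * x) he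
    simpa [← mul_assoc] using this
  · left
    rcases h with ⟨u, hu⟩
    have h2 : e * (1 - e) = 0 := by rw [mul_sub, mul_one, he, sub_self]
    rw [← hu] at h2
    have := congrArg (fun x => x * (↑u⁻¹ : R)) h2
    simpa [mul_assoc] using this

/-- If `X` and `Y` are non-isomorphic `A`-modules with local endomorphism rings,
then any endomorphism `ψ` of `X` factoring through `Y` is not an automorphism of `X`. -/
theorem stmt_1 {A : Type*} [Ring A] {X Y : Type*} [AddCommGroup X] [AddCommGroup Y]
    [Module A X] [Module A Y]
    (hXY : IsEmpty (X ≃ₗ[A] Y))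
    [IsLocalRing (Module.End A X)] [IsLocalRing (Module.End A Y)]
    (ψ : Module.End A X) (ψ' : X →ₗ[A] Y) (ψ'' : Y →ₗ[A] X)
    (hfac : ψ = ψ''.comp ψ') :
    ¬ IsUnit ψ := by
  intro hψ
  set u := hψ.unit with hu
  set v : Module.End A X := (↑u⁻¹ : Module.End A X) with hv
  have hui : v * ψ = 1 := by simpa [hu, hv] using u.inv_mul
  have hiu : ψ * v = 1 := by simpa [hu, hv] using u.mul_inv
  have hui' : ∀ x, v (ψ x) = x := fun x => by
    have := congrArg (fun f : Module.End A X => f x) hui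
    simpa [Module.End.mul_apply] using this
  have hiu' : ∀ x, ψ (v x) = x := fun x => by
    have := congrArg (fun f : Module.End A X => f x) hiu
    simpa [Module.End.mul_apply] using this
  have hfac' : ∀ x, ψ'' (ψ' x) = ψ x := fun x => by rw [hfac]; rfl
  set φ : Module.End A Y := (ψ'.comp v).comp ψ'' with hφ
  have hidem : φ * φ = φ := by
    ext y
    simp only [hφ, Module.End.mul_apply, LinearMap.comp_apply]
    rw [hfac' (v (ψ'' y)), hiu']
  rcases idem_aux hidem with h0 | h1
  · have hψ0 : ψ = 0 := by
      ext x
      have := congrArg (fun f : Module.End A Y => ψ'' (f (ψ' x))) h0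
      simp only [hφ, LinearMap.comp_apply, LinearMap.zero_apply, map_zero] at this
      rw [hfac' x, hfac' (v (ψ (x))), hiu'] at this
      simpa using this
    have h01 : (1 : Module.End A X) = 0 := by rw [← hui, hψ0, mul_zero]
    exact one_ne_zero h01
  · refine hXY.elim ?_
    refine LinearEquiv.ofLinear ψ' (v.comp ψ'') ?_ ?_
    · ext y
      have := congrArg (fun f : Module.End A Y => f y) h1
      simpa [hφ, LinearMap.comp_apply] using this
    · ext x
      simp only [LinearMap.comp_apply, LinearMap.id_apply]
      rw [hfac' x, hui']
end

section
/- Let A be a ring, let X and Y be non-isomorphic A-modules with local endomorphism rings, and let φ, ψ ∈ End_A(X) with ψ factoring through Y. Then φ is an automorphism of X if and only if φ + ψ is an automorphism of X. -/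
/-- In a (possibly noncommutative) local ring, a unit plus a nonunit is a unit. -/
lemma unit_add_nonunit {R : Type*} [Ring R] [IsLocalRing R] {a b : R}
    (ha : IsUnit a) (hb : ¬IsUnit b) : IsUnit (a + b) := by
  obtain ⟨u, hu⟩ := ha
  have h1 : (1 + ↑u⁻¹ * b) + (-(↑u⁻¹ * b)) = 1 := by
    rw [add_neg_cancel_right]
  rcases IsLocalRing.isUnit_or_isUnit_of_add_one h1 with h | h
  · have : a + b = a * (1 + ↑u⁻¹ * b) := by
      rw [mul_add, mul_one, ← hu, ← mul_assoc, Units.mul_inv, one_mul]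
    rw [this]
    exact IsUnit.mul ⟨u, hu⟩ h
  · exfalso
    apply hb
    have h' : IsUnit ((↑u⁻¹ : R) * b) := by simpa using h.neg
    have : b = ↑u * (↑u⁻¹ * b) := by rw [← mul_assoc, Units.mul_inv, one_mul]
    rw [this]
    exact u.isUnit.mul h'

/-- In a local ring, idempotents are 0 or 1. -/
lemma idem_zero_or_one {R : Type*} [Ring R] [IsLocalRing R] {e : R}
    (he : IsIdempotentElem e) : e = 0 ∨ e = 1 := by
  have h1 : e + (1 - e) = 1 := by abel
  rcases IsLocalRing.isUnit_or_isUnit_of_add_one h1 with h | h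
  · right
    have : e * e = e * 1 := by rw [he, mul_one]
    exact h.mul_left_cancel this
  · left
    have : (1 - e) * e = (1 - e) * 0 := by
      rw [mul_zero, sub_mul, one_mul, he, sub_self]
    exact h.mul_left_cancel this

/-- If `X` and `Y` are non-isomorphic `A`-modules with local endomorphism rings,
`φ, ψ` are endomorphisms of `X` and `ψ` factors through `Y`, then `φ` is an automorphism of `X`
if and only if `φ + ψ` is. -/
theorem stmt_2 {A : Type*} [Ring A] {X Y : Type*} [AddCommGroup X] [AddCommGroup Y]
    [Module A X] [Module A Y]
    (hXY : IsEmpty (X ≃ₗ[A] Y))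
    [IsLocalRing (Module.End A X)] [IsLocalRing (Module.End A Y)]
    (φ ψ : Module.End A X) (ψ' : X →ₗ[A] Y) (ψ'' : Y →ₗ[A] X)
    (hfac : ψ = ψ''.comp ψ') :
    IsUnit φ ↔ IsUnit (φ + ψ) := by
  have hψ : ¬ IsUnit ψ := by
    intro h
    obtain ⟨u, hu⟩ := h
    set σ : Module.End A X := ↑u⁻¹ with hσdef
    have hσψ : ∀ x, σ (ψ x) = x := fun x => by
      have : σ * ψ = 1 := by rw [hσdef, ← hu]; exact u.inv_mul
      simpa using congrArg (fun f => f x) this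
    have hψσ : ∀ x, ψ (σ x) = x := fun x => by
      have : ψ * σ = 1 := by rw [hσdef, ← hu]; exact u.mul_inv
      simpa using congrArg (fun f => f x) this
    have hkey : ∀ x, σ (ψ'' (ψ' x)) = x := fun x => by
      have : ψ'' (ψ' x) = ψ x := by rw [hfac]; rfl
      rw [this, hσψ]
    have hkey2 : ∀ x, ψ'' (ψ' (σ x)) = x := fun x => by
      have : ψ'' (ψ' (σ x)) = ψ (σ x) := by rw [hfac]; rfl
      rw [this, hψσ]
    set e : Module.End A Y := (ψ'.comp σ).comp ψ'' with he
    have hidem : IsIdempotentElem e := by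
      show e * e = e
      ext y
      simp only [Module.End.mul_apply, he, LinearMap.comp_apply, hkey]
    rcases idem_zero_or_one hidem with h0 | h1
    · have hz : ψ = 0 := by
        ext x
        have h1 : ψ'' (e (ψ' x)) = ψ x := by
          simp only [he, LinearMap.comp_apply, hkey]
          rw [hfac]; rfl
        rw [h0] at h1
        simpa using h1.symm
      rw [hz] at hu
      have : IsUnit (0 : Module.End A X) := ⟨u, hu⟩
      rw [isUnit_zero_iff] at this
      exact one_ne_zero this.symm
    · refine hXY.elim (LinearEquiv.ofLinear (ψ'.comp σ) ψ'' ?_ ?_)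
      · ext y
        have := congrArg (fun f : Module.End A Y => f y) h1
        simpa [he] using this
      · ext x
        simp [hkey2]
  constructor
  · intro h
    exact unit_add_nonunit h hψ
  · intro h
    have hn : ¬ IsUnit (-ψ) := fun hh => hψ (by simpa using hh.neg)
    have := unit_add_nonunit h hn
    rwa [add_neg_cancel_right] at this
end

section
/- Let A be a ring and let N₁, N₂ be non-isomorphic A-modules with local endomorphism rings. An endomorphism α of N₁ ⊕ N₂, written as a 2×2 matrix α = (α_{ij}) with α_{ij} ∈ Hom_A(N_j, N_i), is an automorphism if and only if α₁₁ and α₂₂ are automorphisms. -/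
/-!
A composite `M → N → M` that is a unit in `End M` makes `M` a direct summand of `N`; the
corresponding idempotent of the local ring `End N` is `0` or `1`, so `M ≅ N`. Hence all such
composites are nonunits. If `α` has inverse `β`, the corners of `αβ = βα = 1` read
`α₁₁β₁₁ + α₁₂β₂₁ = 1` and `β₁₁α₁₁ + β₁₂α₂₁ = 1`, so `α₁₁` has a left and a right inverse in the
local ring `End N₁`; likewise for `α₂₂`. Conversely `α = diag(α₁₁, α₂₂) (1 + X)` with `X`
off-diagonal, and `(1 + X)(1 - X) = (1 - X)(1 + X) = diag(1 - xy, 1 - yx)` is a unit.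
-/

open LinearMap

theorem isUnit_of_isUnit_mul_of_isUnit_mul {M : Type*} [Monoid M] {a b c : M}
    (hab : IsUnit (a * b)) (hca : IsUnit (c * a)) : IsUnit a := by
  obtain ⟨u, hu⟩ := hab
  obtain ⟨v, hv⟩ := hca
  refine isUnit_iff_exists_and_exists.2 ⟨⟨b * ↑u⁻¹, ?_⟩, ⟨↑v⁻¹ * c, ?_⟩⟩
  · rw [← mul_assoc, ← hu, Units.mul_inv]
  · rw [mul_assoc, ← hv, Units.inv_mul]

namespace IsLocalRing

variable {R : Type*} [Ring R] [IsLocalRing R]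

theorem isUnit_of_add_eq_one_of_not_isUnit {a b : R} (h : a + b = 1) (hb : ¬IsUnit b) :
    IsUnit a :=
  (isUnit_or_isUnit_of_add_one h).resolve_right hb

theorem isUnit_one_sub_of_not_isUnit {a : R} (ha : ¬IsUnit a) : IsUnit (1 - a) :=
  isUnit_of_add_eq_one_of_not_isUnit (sub_add_cancel 1 a) ha

theorem eq_zero_or_eq_one_of_isIdempotentElem {e : R} (he : IsIdempotentElem e) :
    e = 0 ∨ e = 1 := by
  rcases isUnit_or_isUnit_of_add_one (add_sub_cancel e 1) with h | h
  · exact Or.inr ((IsIdempotentElem.iff_eq_one_of_isUnit h).1 he)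
  · exact Or.inl (sub_eq_self.1 ((IsIdempotentElem.iff_eq_one_of_isUnit h).1 he.one_sub))

end IsLocalRing

section

variable {R M N : Type*} [Ring R] [AddCommGroup M] [AddCommGroup N] [Module R M] [Module R N]

theorem LinearMap.not_isUnit_comp_of_isEmpty_linearEquiv (hMN : IsEmpty (M ≃ₗ[R] N))
    [IsLocalRing (Module.End R N)] [Nontrivial (Module.End R M)] (f : M →ₗ[R] N) (g : N →ₗ[R] M) :
    ¬IsUnit (g ∘ₗ f) := by
  rintro ⟨u, hu⟩
  obtain ⟨h, hgh⟩ : ∃ h : M →ₗ[R] N, g ∘ₗ h = 1 :=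
    ⟨f ∘ₗ (↑u⁻¹ : Module.End R M), by rw [← comp_assoc, ← hu]; exact u.mul_inv⟩
  have he : IsIdempotentElem (h ∘ₗ g) := by
    show (h ∘ₗ g) ∘ₗ (h ∘ₗ g) = h ∘ₗ g
    rw [comp_assoc, ← comp_assoc g h, hgh, Module.End.one_eq_id, id_comp]
  rcases IsLocalRing.eq_zero_or_eq_one_of_isIdempotentElem he with he0 | he1
  · refine one_ne_zero (α := Module.End R M) ?_
    calc (1 : Module.End R M) = (g ∘ₗ h) ∘ₗ (g ∘ₗ h) := by rw [hgh]; rfl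
      _ = g ∘ₗ (h ∘ₗ g) ∘ₗ h := by simp only [comp_assoc]
      _ = 0 := by rw [he0, zero_comp, comp_zero]
  · exact hMN.elim (.ofLinearMap h g he1 hgh)

namespace Module.End

def fromBlocks (a : Module.End R M) (b : N →ₗ[R] M) (c : M →ₗ[R] N) (d : Module.End R N) :
    Module.End R (M × N) :=
  (a.coprod b).prod (c.coprod d)

@[simp]
theorem fromBlocks_apply (a : Module.End R M) (b : N →ₗ[R] M) (c : M →ₗ[R] N)
    (d : Module.End R N) (x : M × N) :
    fromBlocks a b c d x = (a x.1 + b x.2, c x.1 + d x.2) :=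
  rfl

theorem eq_fromBlocks (φ : Module.End R (M × N)) :
    φ = fromBlocks (fst R M N ∘ₗ φ ∘ₗ inl R M N) (fst R M N ∘ₗ φ ∘ₗ inr R M N)
      (snd R M N ∘ₗ φ ∘ₗ inl R M N) (snd R M N ∘ₗ φ ∘ₗ inr R M N) := by
  ext x <;> simp [Prod.mk_zero_zero]

theorem fromBlocks_inj {a a' : Module.End R M} {b b' : N →ₗ[R] M} {c c' : M →ₗ[R] N}
    {d d' : Module.End R N} :
    fromBlocks a b c d = fromBlocks a' b' c' d' ↔ a = a' ∧ b = b' ∧ c = c' ∧ d = d' := by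
  refine ⟨fun h => ?_, by rintro ⟨rfl, rfl, rfl, rfl⟩; rfl⟩
  refine ⟨?_, ?_, ?_, ?_⟩ <;> ext x
  · simpa using congr(($h (x, 0)).1)
  · simpa using congr(($h (0, x)).1)
  · simpa using congr(($h (x, 0)).2)
  · simpa using congr(($h (0, x)).2)

theorem fromBlocks_mul (a a' : Module.End R M) (b b' : N →ₗ[R] M) (c c' : M →ₗ[R] N)
    (d d' : Module.End R N) :
    fromBlocks a b c d * fromBlocks a' b' c' d' =
      fromBlocks (a * a' + b ∘ₗ c') (a ∘ₗ b' + b ∘ₗ d') (c ∘ₗ a' + d ∘ₗ c') (c ∘ₗ b' + d * d') := by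
  ext x <;> simp

theorem fromBlocks_one : fromBlocks (1 : Module.End R M) 0 0 (1 : Module.End R N) = 1 := by
  ext x <;> simp

theorem fromBlocks_zero_zero (a : Module.End R M) (d : Module.End R N) :
    fromBlocks a 0 0 d = prodMap a d := by
  ext x <;> simp

theorem isUnit_fromBlocks_zero_zero {a : Module.End R M} {d : Module.End R N} (ha : IsUnit a)
    (hd : IsUnit d) : IsUnit (fromBlocks a 0 0 d) := by
  rw [fromBlocks_zero_zero]
  exact (prodMapRingHom R M N).isUnit_map ((Prod.isUnit_iff (x := (a, d))).2 ⟨ha, hd⟩)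

theorem isUnit_fromBlocks_one_one {x : N →ₗ[R] M} {y : M →ₗ[R] N}
    (hxy : IsUnit (1 - x ∘ₗ y)) (hyx : IsUnit (1 - y ∘ₗ x)) : IsUnit (fromBlocks 1 x y 1) := by
  have h : fromBlocks 1 x y 1 * fromBlocks 1 (-x) (-y) 1 =
      fromBlocks (1 - x ∘ₗ y) 0 0 (1 - y ∘ₗ x) := by
    ext <;> simp <;> abel
  have h' : fromBlocks 1 (-x) (-y) 1 * fromBlocks 1 x y 1 =
      fromBlocks (1 - x ∘ₗ y) 0 0 (1 - y ∘ₗ x) := by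
    ext <;> simp <;> abel
  exact isUnit_of_isUnit_mul_of_isUnit_mul (h ▸ isUnit_fromBlocks_zero_zero hxy hyx)
    (h' ▸ isUnit_fromBlocks_zero_zero hxy hyx)

end Module.End

open IsLocalRing in
theorem Module.End.isUnit_fromBlocks_iff (hMN : IsEmpty (M ≃ₗ[R] N))
    [IsLocalRing (Module.End R M)] [IsLocalRing (Module.End R N)] {a : Module.End R M}
    {b : N →ₗ[R] M} {c : M →ₗ[R] N} {d : Module.End R N} :
    IsUnit (fromBlocks a b c d) ↔ IsUnit a ∧ IsUnit d := by
  have hNM : IsEmpty (N ≃ₗ[R] M) := ⟨fun e => hMN.elim e.symm⟩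
  constructor
  · intro h
    obtain ⟨β, hαβ, hβα⟩ := isUnit_iff_exists.1 h
    rw [eq_fromBlocks β, fromBlocks_mul, ← fromBlocks_one, fromBlocks_inj] at hαβ hβα
    obtain ⟨h₁₁, -, -, h₂₂⟩ := hαβ
    obtain ⟨h₁₁', -, -, h₂₂'⟩ := hβα
    rw [add_comm] at h₂₂ h₂₂'
    exact ⟨isUnit_of_isUnit_mul_of_isUnit_mul
        (isUnit_of_add_eq_one_of_not_isUnit h₁₁ (not_isUnit_comp_of_isEmpty_linearEquiv hMN _ _))
        (isUnit_of_add_eq_one_of_not_isUnit h₁₁' (not_isUnit_comp_of_isEmpty_linearEquiv hMN _ _)),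
      isUnit_of_isUnit_mul_of_isUnit_mul
        (isUnit_of_add_eq_one_of_not_isUnit h₂₂ (not_isUnit_comp_of_isEmpty_linearEquiv hNM _ _))
        (isUnit_of_add_eq_one_of_not_isUnit h₂₂' (not_isUnit_comp_of_isEmpty_linearEquiv hNM _ _))⟩
  · rintro ⟨⟨a, rfl⟩, ⟨d, rfl⟩⟩
    have hfactor : fromBlocks (a : Module.End R M) b c d = fromBlocks (a : Module.End R M) 0 0 d *
        fromBlocks 1 ((↑a⁻¹ : Module.End R M) ∘ₗ b) ((↑d⁻¹ : Module.End R N) ∘ₗ c) 1 := by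
      rw [fromBlocks_mul]
      simp [← comp_assoc, ← Module.End.mul_eq_comp]
      rfl
    rw [hfactor]
    exact (isUnit_fromBlocks_zero_zero a.isUnit d.isUnit).mul <| isUnit_fromBlocks_one_one
      (isUnit_one_sub_of_not_isUnit (not_isUnit_comp_of_isEmpty_linearEquiv hMN _ _))
      (isUnit_one_sub_of_not_isUnit (not_isUnit_comp_of_isEmpty_linearEquiv hNM _ _))

end

/-- For non-isomorphic `A`-modules `N₁, N₂` with local endomorphism rings, an
endomorphism `α` of `N₁ ⊕ N₂` given by the matrix `(α_{ij})` is an automorphism if and only if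
the diagonal entries `α₁₁` and `α₂₂` are automorphisms. -/
theorem stmt_3 {A : Type*} [Ring A] {N₁ N₂ : Type*} [AddCommGroup N₁] [AddCommGroup N₂]
    [Module A N₁] [Module A N₂]
    (hiso : IsEmpty (N₁ ≃ₗ[A] N₂))
    [IsLocalRing (Module.End A N₁)] [IsLocalRing (Module.End A N₂)]
    (α : Module.End A (N₁ × N₂))
    (α₁₁ : Module.End A N₁) (α₁₂ : N₂ →ₗ[A] N₁)
    (α₂₁ : N₁ →ₗ[A] N₂) (α₂₂ : Module.End A N₂)
    (hα : ∀ x : N₁ × N₂, α x = (α₁₁ x.1 + α₁₂ x.2, α₂₁ x.1 + α₂₂ x.2)) :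
    IsUnit α ↔ IsUnit α₁₁ ∧ IsUnit α₂₂ := by
  obtain rfl : α = Module.End.fromBlocks α₁₁ α₁₂ α₂₁ α₂₂ := LinearMap.ext hα
  exact Module.End.isUnit_fromBlocks_iff hiso
end

section
/- Let R be a commutative noetherian semilocal ring and let M be a nonzero finitely generated R-module. Then the endomorphism ring End_R(M) is semilocal, i.e., End_R(M) modulo its Jacobson radical is a semisimple ring. -/
open LinearMap

/-- A finite product of semisimple modules is semisimple. -/
lemma aux_pi_semisimple {A : Type*} [Ring A] {ι : Type*} [Finite ι] (N : ι → Type*)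
    [∀ i, AddCommGroup (N i)] [∀ i, Module A (N i)] [∀ i, IsSemisimpleModule A (N i)] :
    IsSemisimpleModule A (∀ i, N i) := by
  classical
  cases nonempty_fintype ι
  exact isSemisimpleModule_of_isSemisimpleModule_submodule'
    (p := fun i => LinearMap.range (LinearMap.single A N i))
    (fun i => .range _)
    (by simp_rw [range_eq_map, Submodule.iSup_map_single, Submodule.pi_top])

/-- An artinian module whose maximal submodules intersect in `⊥` is semisimple. -/
lemma aux_semisimple_of_artinian {A X : Type*} [Ring A] [AddCommGroup X] [Module A X]
    [IsArtinian A X] (hc : sInf {m : Submodule A X | IsCoatom m} = ⊥) :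
    IsSemisimpleModule A X := by
  classical
  obtain ⟨N, hN, hmin⟩ := IsArtinian.set_has_minimal
      {N : Submodule A X | ∃ s : Finset (Submodule A X), (∀ m ∈ s, IsCoatom m) ∧ N = s.inf id}
      ⟨⊤, ∅, by simp, by simp⟩
  obtain ⟨s, hs, rfl⟩ := hN
  have hbot : s.inf id = ⊥ := by
    rw [← le_bot_iff, ← hc]
    refine le_sInf fun m hm => ?_
    by_contra hle
    refine hmin (s.inf id ⊓ m) ⟨insert m s, fun k hk => (Finset.mem_insert.mp hk).elim
      (fun h => h ▸ hm) (hs k), by simp [Finset.inf_insert, inf_comm]⟩ ?_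
    exact inf_lt_left.mpr hle
  haveI : ∀ m : s, IsSimpleModule A (X ⧸ (m : Submodule A X)) :=
    fun m => isSimpleModule_iff_isCoatom.mpr (hs m m.2)
  let f : X →ₗ[A] ∀ m : s, X ⧸ (m : Submodule A X) :=
    LinearMap.pi fun m => (m : Submodule A X).mkQ
  have hker : LinearMap.ker f = ⊥ := by
    rw [eq_bot_iff]
    intro x hx
    rw [LinearMap.mem_ker] at hx
    have hxm : ∀ m ∈ s, x ∈ m := by
      intro m hm
      have := congrFun hx ⟨m, hm⟩
      simpa [f, Submodule.Quotient.mk_eq_zero] using this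
    have : x ∈ s.inf _root_.id :=
      (Submodule.mem_finsetInf (p := _root_.id)).mpr fun i hi => hxm i hi
    rwa [hbot] at this
  haveI : IsSemisimpleModule A (∀ m : s, X ⧸ (m : Submodule A X)) := aux_pi_semisimple _
  exact IsSemisimpleModule.congr (LinearEquiv.ofInjective f (ker_eq_bot.mp hker))

set_option maxHeartbeats 2000000 in
/-- If `R` is a commutative noetherian semilocal ring (finitely many maximal
ideals) and `M ≠ 0` is a finitely generated `R`-module, then `End_R(M)` is semilocal, i.e.
`End_R(M)` modulo its Jacobson radical (the intersection of its maximal left ideals) is a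
semisimple ring. -/
theorem stmt_4 {R : Type*} [CommRing R] [IsNoetherianRing R]
    (hsemilocal : {I : Ideal R | I.IsMaximal}.Finite)
    {M : Type*} [AddCommGroup M] [Module R M] [Module.Finite R M] [Nontrivial M] :
    IsSemisimpleModule (Module.End R M)
      (Module.End R M ⧸ Ideal.jacobson (⊥ : Ideal (Module.End R M))) := by
  classical
  set A := Module.End R M with hA
  haveI : Module.Finite R A := ⟨IsNoetherian.noetherian ⊤⟩
  haveI : Nontrivial R := Module.nontrivial R M
  set J := Ideal.jacobson (⊥ : Ideal R) with hJdef
  set JA := Ideal.jacobson (⊥ : Ideal A) with hJAdef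
  -- Step 1: J • A ⊆ JA
  have key : ∀ r ∈ J, ∀ g : A, r • g ∈ JA := by
    intro r hr g
    rw [hJAdef, Ideal.jacobson, Ideal.mem_sInf]
    rintro m ⟨-, hm⟩
    haveI : IsSimpleModule A (A ⧸ m) := isSimpleModule_iff_isCoatom.mpr hm.out
    haveI : Nontrivial (A ⧸ m) := IsSimpleModule.nontrivial A _
    haveI : Module.Finite R (A ⧸ m) :=
      Module.Finite.of_surjective (m.mkQ.restrictScalars R) (Submodule.Quotient.mk_surjective _)
    have hne := Submodule.top_ne_ideal_smul_of_le_jacobson_annihilator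
      (M := A ⧸ m) (I := J) (Ideal.jacobson_mono bot_le)
    set N : Submodule R (A ⧸ m) := J • ⊤ with hN
    have hsmulmem : ∀ (a : A) (x : A ⧸ m), x ∈ N → a • x ∈ N := by
      intro a x hx
      refine Submodule.smul_induction_on hx (fun r' hr' y _ => ?_) (fun y z hy hz => ?_)
      · rw [smul_comm]
        exact Submodule.smul_mem_smul hr' trivial
      · rw [smul_add]
        exact N.add_mem hy hz
    let N' : Submodule A (A ⧸ m) :=
      { carrier := N
        add_mem' := fun h h' => N.add_mem h h'
        zero_mem' := N.zero_mem
        smul_mem' := fun a x hx => hsmulmem a x hx }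
    have hN' : N' = ⊥ := by
      rcases eq_bot_or_eq_top N' with h | h
      · exact h
      · exfalso
        apply hne
        refine le_antisymm (fun x _ => ?_) le_top
        have : x ∈ N' := h ▸ Submodule.mem_top
        exact this
    have hmem : Submodule.Quotient.mk (p := m) (r • g) ∈ N' := by
      show Submodule.Quotient.mk (r • g) ∈ N
      rw [Submodule.Quotient.mk_smul]
      exact Submodule.smul_mem_smul hr trivial
    rw [hN'] at hmem
    rw [Submodule.mem_bot] at hmem
    exact (Submodule.Quotient.mk_eq_zero m).mp hmem
  -- Step 2: A ⧸ JA is a torsion-by-J module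
  have hT : Module.IsTorsionBySet R (A ⧸ JA) (J : Set R) := by
    intro x r
    obtain ⟨g, rfl⟩ := Submodule.Quotient.mk_surjective _ x
    rw [← Submodule.Quotient.mk_smul]
    exact (Submodule.Quotient.mk_eq_zero _).mpr (key r r.2 g)
  letI : Module (R ⧸ J) (A ⧸ JA) := hT.module
  -- Step 3: R ⧸ J is a semisimple ring
  letI := hsemilocal.fintype
  have hJ : J = ⨅ I : {I : Ideal R | I.IsMaximal}, (I : Ideal R) := by
    rw [hJdef, Ideal.jacobson]
    rw [show {J : Ideal R | ⊥ ≤ J ∧ J.IsMaximal} = {I : Ideal R | I.IsMaximal} by ext; simp]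
    exact sInf_eq_iInf' _
  haveI : ∀ I : {I : Ideal R | I.IsMaximal}, (I : Ideal R).IsMaximal := fun I => I.2
  letI : ∀ I : {I : Ideal R | I.IsMaximal}, Field (R ⧸ (I : Ideal R)) :=
    fun I => Ideal.Quotient.field _
  let e : (R ⧸ J) ≃+* ∀ I : {I : Ideal R | I.IsMaximal}, R ⧸ (I : Ideal R) :=
    (Ideal.quotEquivOfEq hJ).trans (Ideal.quotientInfRingEquivPiQuotient _ fun I K h =>
      Ideal.isCoprime_iff_sup_eq.mpr <| I.2.coprime_of_ne K.2 <| by rwa [Ne, Subtype.coe_inj])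
  haveI : IsSemisimpleRing (R ⧸ J) := e.symm.isSemisimpleRing
  haveI hSS' : IsSemisimpleModule (R ⧸ J) (A ⧸ JA) := inferInstance
  -- Step 4: transfer semisimplicity down to R, get artinian over R, then over A
  let ℓ : (A ⧸ JA) →ₛₗ[Ideal.Quotient.mk J] (A ⧸ JA) :=
    { AddMonoidHom.id _ with map_smul' := fun r x => (hT.mk_smul r x).symm }
  haveI hsR : IsSemisimpleModule R (A ⧸ JA) :=
    (ℓ.isSemisimpleModule_iff_of_bijective Function.bijective_id).mpr hSS'
  haveI : Module.Finite R (A ⧸ JA) :=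
    Module.Finite.of_surjective (JA.mkQ.restrictScalars R) (Submodule.Quotient.mk_surjective _)
  haveI : IsArtinian R (A ⧸ JA) := inferInstance
  haveI : IsArtinian A (A ⧸ JA) := isArtinian_of_tower R inferInstance
  -- Step 5: the maximal submodules of A ⧸ JA intersect in ⊥
  have hc : sInf {m : Submodule A (A ⧸ JA) | IsCoatom m} = ⊥ := by
    rw [eq_bot_iff]
    intro x hx
    rw [Submodule.mem_sInf] at hx
    obtain ⟨g, rfl⟩ := Submodule.Quotient.mk_surjective _ x
    rw [Submodule.mem_bot, Submodule.Quotient.mk_eq_zero]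
    show g ∈ JA
    rw [hJAdef, Ideal.jacobson, Ideal.mem_sInf]
    rintro m ⟨-, hm⟩
    have hmc : IsCoatom m := hm.out
    have hJAm : JA ≤ m := sInf_le ⟨bot_le, hm⟩
    have hcm : Submodule.comap JA.mkQ (Submodule.map JA.mkQ (m : Submodule A A)) = m := by
      rw [Submodule.comap_map_eq, Submodule.ker_mkQ, sup_eq_left.mpr hJAm]
    have hcoatom : IsCoatom (Submodule.map JA.mkQ (m : Submodule A A)) := by
      constructor
      · intro htop
        apply hmc.1
        rw [← hcm, htop, Submodule.comap_top]
      · intro N hN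
        have h1 : m ≤ Submodule.comap JA.mkQ N := by
          rw [← hcm]; exact Submodule.comap_mono hN.le
        have h2 : m ≠ Submodule.comap JA.mkQ N := by
          intro h
          apply hN.ne
          rw [← Submodule.map_comap_eq_of_surjective (Submodule.mkQ_surjective JA) N,
            ← h]
        have := hmc.2 _ (lt_of_le_of_ne h1 h2)
        rw [← Submodule.map_comap_eq_of_surjective (Submodule.mkQ_surjective JA) N,
          this, Submodule.map_top, Submodule.range_mkQ]
    have := hx _ hcoatom
    rw [← hcm]
    exact Submodule.mem_comap.mpr this
  exact aux_semisimple_of_artinian hc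
end

section
/- Let (R, m, k) be a commutative local ring such that 2 is a unit in R, m is not isomorphic to R as an R-module, and End_R(m) is commutative and local. Then the map from Aut_R(R ⊕ m) to k* × Aut_R(m) sending a matrix (α_{ij}) to ([α₁₁(1)] mod m, α₁₁α₂₂ − α₂₁α₁₂) is a surjective group homomorphism whose kernel is the commutator subgroup; hence it induces an isomorphism Aut_R(R ⊕ m)_ab ≅ k* × Aut_R(m). -/
/-!
Write `α ∈ Aut_R(R ⊕ m)` as a block matrix `(a, b; c, d)`. Every `f : m → R` lands in `m`, since
if `f x` were a unit then `f` would be an isomorphism `m ≅ R`. Hence the corner `a` is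
multiplicative modulo `m`, and, `End_R(m)` being commutative, the determinant `a d - c b` is
multiplicative as for matrices over a commutative ring.

Since `2` is a unit, every elementary transvection `τ` is the commutator `⁅g, τ⁆`, where `g` is
the diagonal automorphism doubling the vector of `τ`, so that `g τ g⁻¹ = τ²`. An element of the
kernel has a unit corner `u ≡ 1 mod m` and determinant `1`, so it factors as
(lower transvection) · `diag(u, u⁻¹)` · (upper transvection), and because `u - 1 ∈ m`, Whitehead's
lemma writes `diag(u, u⁻¹)` as a product of four transvections. Conversely the target group is
abelian, so the commutator subgroup lies in the kernel.
-/

open IsLocalRing LinearMap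

open scoped commutatorElement in
theorem mem_commutator_of_conj_eq_sq {G : Type*} [Group G] {g x : G}
    (h : g * x * g⁻¹ = x ^ 2) : x ∈ commutator G := by
  have : x = ⁅g, x⁆ := by
    rw [commutatorElement_def, h, pow_two, mul_inv_cancel_right]
  rw [this, commutator_def]
  exact Subgroup.commutator_mem_commutator (Subgroup.mem_top g) (Subgroup.mem_top x)

theorem LinearEquiv.transvection_mem_commutator {R V : Type*} [CommRing R] [AddCommGroup V]
    [Module R V] {f : Module.Dual R V} {v : V} (hfv : f v = 0) {g : V ≃ₗ[R] V}
    (hf : f ∘ₗ g.symm.toLinearMap = f) (hv : g v = (2 : R) • v) :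
    LinearEquiv.transvection hfv ∈ commutator (V ≃ₗ[R] V) := by
  refine mem_commutator_of_conj_eq_sq (g := g) (LinearEquiv.ext fun x => ?_)
  have hfx : f (g.symm x) = f x := LinearMap.congr_fun hf x
  rw [pow_two]
  change g (LinearEquiv.transvection hfv (g.symm x))
    = LinearEquiv.transvection hfv (LinearEquiv.transvection hfv x)
  simp only [LinearEquiv.transvection.apply, map_add, map_smul, hfx, hv, hfv,
    LinearEquiv.apply_symm_apply]
  module

namespace Ideal

variable {R : Type*} [CommRing R] {I : Ideal R}

theorem coe_smul_comm (x y : I) : (x : R) • y = (y : R) • x := Subtype.ext (mul_comm _ _)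

theorem apply_mul_comm (f : I →ₗ[R] R) (x y : I) : f x * y = f y * x := by
  rw [mul_comm, ← smul_eq_mul, ← map_smul, coe_smul_comm, map_smul, smul_eq_mul, mul_comm]

theorem bijective_of_isUnit_apply (f : I →ₗ[R] R) {x : I} (hx : IsUnit (f x)) :
    Function.Bijective f := by
  refine ⟨(injective_iff_map_eq_zero f).2 fun y hy => Subtype.ext ?_, fun r => ?_⟩
  · rw [Submodule.coe_zero, ← hx.mul_right_eq_zero, apply_mul_comm, hy, zero_mul]
  · refine ⟨(r * hx.unit⁻¹) • x, ?_⟩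
    rw [map_smul, smul_eq_mul, mul_assoc, hx.val_inv_mul, mul_one]

theorem coe_apply_mul_coe_apply_comm {f g : Module.End R I} (h : Commute f g) (x y : I) :
    (f x : R) * g y = (f y : R) * g x := by
  have : (f x : R) • g y = (g x : R) • f y := calc
    (f x : R) • g y = g ((y : R) • f x) := by rw [coe_smul_comm y (f x), map_smul]
    _ = (y : R) • f (g x) := by rw [map_smul, ← Module.End.mul_apply, ← h.eq, Module.End.mul_apply]
    _ = (g x : R) • f y := by rw [← map_smul, coe_smul_comm y (g x), map_smul]
  rw [mul_comm (f y : R)]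
  exact congrArg Subtype.val this

end Ideal

theorem IsLocalRing.range_le_maximalIdeal {R : Type*} [CommRing R] [IsLocalRing R]
    (hm : IsEmpty (maximalIdeal R ≃ₗ[R] R)) (f : maximalIdeal R →ₗ[R] R) :
    range f ≤ maximalIdeal R := by
  rintro _ ⟨x, rfl⟩
  by_contra hx
  exact hm.false (.ofBijective f (Ideal.bijective_of_isUnit_apply f (notMem_maximalIdeal.1 hx)))

namespace BlockEnd

section Module

variable {R M : Type*} [CommRing R] [AddCommGroup M] [Module R M]

/- The blocks of `α : End_R(R ⊕ M)`, with `End_R(R) ≅ R` and `Hom_R(R, M) ≅ M` by evaluation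
at `1`: `e₁₁ α = α₁₁(1)` and `e₂₁ α = α₂₁(1)`. -/

def e₁₁ (α : Module.End R (R × M)) : R := (α (1, 0)).1

def e₁₂ (α : Module.End R (R × M)) : M →ₗ[R] R := fst R R M ∘ₗ α ∘ₗ inr R R M

def e₂₁ (α : Module.End R (R × M)) : M := (α (1, 0)).2

def e₂₂ (α : Module.End R (R × M)) : Module.End R M := snd R R M ∘ₗ α ∘ₗ inr R R M

theorem e₁₂_apply (α : Module.End R (R × M)) (x : M) : e₁₂ α x = (α (0, x)).1 := rfl

theorem e₂₂_apply (α : Module.End R (R × M)) (x : M) : e₂₂ α x = (α (0, x)).2 := rfl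

theorem apply_eq (α : Module.End R (R × M)) (r : R) (x : M) :
    α (r, x) = (e₁₁ α * r + e₁₂ α x, r • e₂₁ α + e₂₂ α x) := by
  have : (r, x) = r • ((1 : R), (0 : M)) + (0, x) := by ext <;> simp
  rw [this, map_add, map_smul]
  ext <;> simp [e₁₁, e₂₁, e₁₂_apply, e₂₂_apply, mul_comm]

theorem e₁₁_mul (α β : Module.End R (R × M)) :
    e₁₁ (α * β) = e₁₁ α * e₁₁ β + e₁₂ α (e₂₁ β) := by
  simp [e₁₁, e₂₁, Module.End.mul_apply, apply_eq α (β (1, 0)).1]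

theorem e₁₂_mul (α β : Module.End R (R × M)) (x : M) :
    e₁₂ (α * β) x = e₁₁ α * e₁₂ β x + e₁₂ α (e₂₂ β x) := by
  simp [e₁₂_apply, e₂₂_apply, Module.End.mul_apply, apply_eq α (β (0, x)).1]

theorem e₂₁_mul (α β : Module.End R (R × M)) :
    e₂₁ (α * β) = e₁₁ β • e₂₁ α + e₂₂ α (e₂₁ β) := by
  simp [e₁₁, e₂₁, Module.End.mul_apply, apply_eq α (β (1, 0)).1]

theorem e₂₂_mul (α β : Module.End R (R × M)) (x : M) :
    e₂₂ (α * β) x = e₁₂ β x • e₂₁ α + e₂₂ α (e₂₂ β x) := by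
  simp [e₁₂_apply, e₂₂_apply, Module.End.mul_apply, apply_eq α (β (0, x)).1]

def det (α : Module.End R (R × M)) : Module.End R M :=
  e₁₁ α • e₂₂ α - toSpanSingleton R M (e₂₁ α) ∘ₗ e₁₂ α

theorem det_apply (α : Module.End R (R × M)) (x : M) :
    det α x = e₁₁ α • e₂₂ α x - e₁₂ α x • e₂₁ α := rfl

theorem det_one : det (1 : Module.End R (R × M)) = 1 := by
  ext x
  simp [det_apply, e₁₁, e₁₂_apply, e₂₂_apply]

def upper (β : M →ₗ[R] R) : (R × M) ≃ₗ[R] (R × M) :=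
  LinearEquiv.transvection (f := β ∘ₗ snd R R M) (v := (1, 0)) (by simp)

def lower (c : M) : (R × M) ≃ₗ[R] (R × M) :=
  LinearEquiv.transvection (f := fst R R M) (v := (0, c)) (by simp)

def diag (u v : Rˣ) : (R × M) ≃ₗ[R] (R × M) :=
  (LinearEquiv.smulOfUnit u).prodCongr (LinearEquiv.smulOfUnit v)

@[simp]
theorem upper_apply (β : M →ₗ[R] R) (r : R) (x : M) : upper β (r, x) = (r + β x, x) := by
  change (r, x) + β x • ((1 : R), (0 : M)) = _
  simp

@[simp]
theorem lower_apply (c : M) (r : R) (x : M) : lower c (r, x) = (r, x + r • c) := by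
  change (r, x) + r • ((0 : R), c) = _
  simp

@[simp]
theorem diag_apply (u v : Rˣ) (r : R) (x : M) : diag u v (r, x) = (u * r, (v : R) • x) := rfl

theorem upper_mem_commutator (h2 : IsUnit (2 : R)) (β : M →ₗ[R] R) :
    upper β ∈ commutator ((R × M) ≃ₗ[R] (R × M)) :=
  LinearEquiv.transvection_mem_commutator _ (g := diag h2.unit 1)
    (LinearMap.ext fun _ => by simp [diag, LinearEquiv.smulOfUnit]) (by simp)

theorem lower_mem_commutator (h2 : IsUnit (2 : R)) (c : M) :
    lower c ∈ commutator ((R × M) ≃ₗ[R] (R × M)) :=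
  LinearEquiv.transvection_mem_commutator _ (g := diag 1 h2.unit)
    (LinearMap.ext fun _ => by simp [diag, LinearEquiv.smulOfUnit]) (by simp)

theorem eq_lower_mul_diag_mul_upper (α : (R × M) ≃ₗ[R] (R × M)) (u : Rˣ)
    (hu : e₁₁ α.toLinearMap = u) (hdet : det α.toLinearMap = 1) :
    α = lower (u⁻¹ • e₂₁ α.toLinearMap) * diag u u⁻¹ * upper (u⁻¹ • e₁₂ α.toLinearMap) := by
  set a := α.toLinearMap
  refine LinearEquiv.ext fun ⟨r, x⟩ => ?_
  have hx : (u : R) • e₂₂ a x - e₁₂ a x • e₂₁ a = x := by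
    rw [← hu]; exact LinearMap.congr_fun hdet x
  change a (r, x) = lower _ (diag u u⁻¹ (upper _ (r, x)))
  rw [apply_eq]
  simp only [upper_apply, diag_apply, lower_apply, LinearMap.smul_apply, hu, Prod.mk.injEq]
  constructor
  · simp [Units.smul_def, mul_add, ← mul_assoc]
  · simp only [Units.smul_def, mul_smul]
    linear_combination (norm := module) ((u⁻¹ : Rˣ) : R) • hx
      - u.mul_inv • (r • e₂₁ a + e₂₂ a x + ((u⁻¹ : Rˣ) : R) • e₁₂ a x • e₂₁ a)

end Module

section Ideal

variable {R : Type*} [CommRing R] {I : Ideal R}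

theorem e₁₂_apply_mul_e₂₂_apply_comm (hI : ∀ f : I →ₗ[R] R, range f ≤ I)
    (hcomm : ∀ f g : Module.End R I, Commute f g) (α : Module.End R (R × I)) (x y : I) :
    e₁₂ α x * e₂₂ α y = e₁₂ α y * e₂₂ α x :=
  Ideal.coe_apply_mul_coe_apply_comm (f := (e₁₂ α).codRestrict I fun z => hI _ ⟨z, rfl⟩)
    (hcomm _ _) x y

theorem det_mul (hI : ∀ f : I →ₗ[R] R, range f ≤ I)
    (hcomm : ∀ f g : Module.End R I, Commute f g) (α β : Module.End R (R × I)) :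
    det (α * β) = det α * det β := by
  ext x
  have key := e₁₂_apply_mul_e₂₂_apply_comm hI hcomm α (e₂₁ β) (e₂₂ β x)
  simp only [Module.End.mul_apply, det_apply, e₁₁_mul, e₁₂_mul, e₂₁_mul, e₂₂_mul, map_sub,
    map_smul, Submodule.coe_sub, Submodule.coe_add, Submodule.coe_smul, smul_eq_mul]
  linear_combination key

theorem coe_det_apply (α : Module.End R (R × I)) (x : I) :
    (det α x : R) = (α (e₂₂ α x, 0)).1 - (α (e₁₂ α x, 0)).2 := by
  simp [det_apply, apply_eq α, mul_comm]

def detHom (hI : ∀ f : I →ₗ[R] R, range f ≤ I) (hcomm : ∀ f g : Module.End R I, Commute f g) :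
    Module.End R (R × I) →* Module.End R I where
  toFun := det
  map_one' := det_one
  map_mul' := det_mul hI hcomm

def e₁₁ModHom (hI : ∀ f : I →ₗ[R] R, range f ≤ I) : Module.End R (R × I) →* R ⧸ I where
  toFun α := Ideal.Quotient.mk I (e₁₁ α)
  map_one' := by simp [e₁₁]
  map_mul' α β := by
    simp [e₁₁_mul, Ideal.Quotient.eq_zero_iff_mem.2 (hI _ ⟨e₂₁ β, rfl⟩)]

/- Whitehead's lemma: with `t = u - 1`, `diag(u, u⁻¹)` is the matrix product
`(1, 0; -u⁻¹t, 1) (1, 1; 0, 1) (1, 0; t, 1) (1, -u⁻¹; 0, 1)`. -/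
theorem diag_mem_commutator (h2 : IsUnit (2 : R)) {u : Rˣ} (hu : (u : R) - 1 ∈ I) :
    diag u u⁻¹ ∈ commutator ((R × I) ≃ₗ[R] (R × I)) := by
  let t : I := ⟨u - 1, hu⟩
  have : diag u u⁻¹ = lower (-((u⁻¹ : Rˣ) • t)) * upper I.subtype * lower t
      * upper (-((u⁻¹ : Rˣ) • I.subtype)) := by
    refine LinearEquiv.ext fun ⟨r, x⟩ => ?_
    change diag u u⁻¹ (r, x) = lower _ (upper _ (lower _ (upper _ (r, x))))
    simp only [upper_apply, diag_apply, lower_apply, LinearMap.neg_apply, LinearMap.smul_apply,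
      Submodule.subtype_apply, Units.smul_def, smul_eq_mul]
    ext
    · push_cast [smul_eq_mul]
      linear_combination (x : R) * u.inv_mul
    · push_cast [smul_eq_mul]
      linear_combination ((x : R) + (r - (u⁻¹ : Rˣ) * x) * (u - 1)) * u.inv_mul
  rw [this]
  exact mul_mem (mul_mem (mul_mem (lower_mem_commutator h2 _) (upper_mem_commutator h2 _))
    (lower_mem_commutator h2 _)) (upper_mem_commutator h2 _)

end Ideal

section LocalRing

open GeneralLinearGroup

variable {R : Type*} [CommRing R] [IsLocalRing R] (hm : IsEmpty (maximalIdeal R ≃ₗ[R] R))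
  (hcomm : ∀ f g : Module.End R (maximalIdeal R), Commute f g)

noncomputable def residueDet :
    ((R × maximalIdeal R) ≃ₗ[R] (R × maximalIdeal R)) →*
      (ResidueField R)ˣ × (maximalIdeal R ≃ₗ[R] maximalIdeal R) :=
  let toUnits := (generalLinearEquiv R (R × maximalIdeal R)).symm.toMonoidHom
  ((Units.map (e₁₁ModHom (range_le_maximalIdeal hm))).comp toUnits).prod
    ((generalLinearEquiv R _).toMonoidHom.comp
      ((Units.map (detHom (range_le_maximalIdeal hm) hcomm)).comp toUnits))

theorem residueDet_fst (α : (R × maximalIdeal R) ≃ₗ[R] (R × maximalIdeal R)) :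
    ((residueDet hm hcomm α).1 : ResidueField R) = residue R (e₁₁ α.toLinearMap) := rfl

theorem residueDet_snd_apply (α : (R × maximalIdeal R) ≃ₗ[R] (R × maximalIdeal R))
    (x : maximalIdeal R) : (residueDet hm hcomm α).2 x = det α.toLinearMap x := rfl

theorem residueDet_surjective : Function.Surjective (residueDet hm hcomm) := by
  rintro ⟨u, ψ⟩
  obtain ⟨a, rfl⟩ := surjective_units_map_of_local_ringHom (residue R) residue_surjective
    inferInstance u
  refine ⟨(LinearEquiv.smulOfUnit a).prodCongr (ψ.trans (LinearEquiv.smulOfUnit a⁻¹)),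
    Prod.ext (Units.ext ?_) (LinearEquiv.ext fun x => ?_)⟩
  · simp [residueDet_fst, e₁₁, LinearEquiv.smulOfUnit, Units.smul_def]
  · simp [residueDet_snd_apply, det_apply, e₁₁, e₁₂_apply, e₂₂_apply, LinearEquiv.smulOfUnit,
      Units.smul_def, smul_smul]

theorem ker_residueDet (h2 : IsUnit (2 : R)) :
    (residueDet hm hcomm).ker = commutator ((R × maximalIdeal R) ≃ₗ[R] (R × maximalIdeal R)) := by
  refine le_antisymm (fun α hα => ?_) ?_
  · rw [MonoidHom.mem_ker] at hα
    have h1 : residue R (e₁₁ α.toLinearMap) = 1 := by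
      rw [← residueDet_fst hm hcomm, hα]; rfl
    have hdet : det α.toLinearMap = 1 := LinearMap.ext fun x => by
      rw [← residueDet_snd_apply hm hcomm, hα]; rfl
    have hunit : IsUnit (e₁₁ α.toLinearMap) :=
      (residue_ne_zero_iff_isUnit _).1 (h1 ▸ one_ne_zero)
    rw [eq_lower_mul_diag_mul_upper α hunit.unit rfl hdet]
    refine mul_mem (mul_mem (lower_mem_commutator h2 _) (diag_mem_commutator h2 ?_))
      (upper_mem_commutator h2 _)
    rw [← residue_eq_zero_iff, map_sub, IsUnit.unit_spec, h1, map_one, sub_self]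
  · rw [commutator_def, Subgroup.commutator_le]
    intro g _ h _
    rw [MonoidHom.mem_ker, map_commutatorElement, commutatorElement_eq_one_iff_commute]
    exact Prod.ext (mul_comm _ _) (LinearEquiv.ext (LinearMap.congr_fun (hcomm _ _)))

end LocalRing

end BlockEnd

theorem stmt_11_general {R : Type*} [CommRing R] [IsLocalRing R]
    (h2 : IsUnit (2 : R))
    (hm : IsEmpty ((maximalIdeal R) ≃ₗ[R] R))
    (hcomm : ∀ f g : Module.End R (maximalIdeal R), f * g = g * f) :
    ∃ δ : ((R × maximalIdeal R) ≃ₗ[R] (R × maximalIdeal R)) →*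
        (ResidueField R)ˣ × ((maximalIdeal R) ≃ₗ[R] (maximalIdeal R)),
      (∀ α : (R × maximalIdeal R) ≃ₗ[R] (R × maximalIdeal R),
        ((δ α).1 : ResidueField R) = residue R (α (1, 0)).1) ∧
      (∀ (α : (R × maximalIdeal R) ≃ₗ[R] (R × maximalIdeal R)) (x : maximalIdeal R),
        (((δ α).2 x : R))
          = (α (((α (0, x)).2 : R), 0)).1 - ((α ((α (0, x)).1, 0)).2 : R)) ∧
      Function.Surjective δ ∧
      δ.ker = commutator ((R × maximalIdeal R) ≃ₗ[R] (R × maximalIdeal R)) :=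
  ⟨BlockEnd.residueDet hm hcomm, BlockEnd.residueDet_fst hm hcomm,
    fun α => BlockEnd.coe_det_apply α.toLinearMap, BlockEnd.residueDet_surjective hm hcomm,
    BlockEnd.ker_residueDet hm hcomm h2⟩

/-- Let `(R, m, k)` be a commutative local ring with `2` a unit, `m ≇ R`, and
`End_R(m)` commutative and local. The map `Aut_R(R ⊕ m) → k* × Aut_R(m)` sending `(α_{ij})` to
`([α₁₁(1)] mod m, α₁₁α₂₂ − α₂₁α₁₂)` is a surjective group homomorphism whose kernel is the
commutator subgroup; hence `Aut_R(R ⊕ m)_ab ≅ k* × Aut_R(m)`. The determinant, an endomorphism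
of `m`, is described by its values: for `x ∈ m`,
`(α₁₁α₂₂ − α₂₁α₁₂)(x) = α₁₁(α₂₂ x) − α₂₁(α₁₂ x)` computed inside `R`. -/
theorem stmt_11 {R : Type*} [CommRing R] [IsLocalRing R]
    (h2 : IsUnit (2 : R))
    (hm : IsEmpty ((maximalIdeal R) ≃ₗ[R] R))
    (hcomm : ∀ f g : Module.End R (maximalIdeal R), f * g = g * f)
    [IsLocalRing (Module.End R (maximalIdeal R))] :
    ∃ δ : ((R × maximalIdeal R) ≃ₗ[R] (R × maximalIdeal R)) →*
        (ResidueField R)ˣ × ((maximalIdeal R) ≃ₗ[R] (maximalIdeal R)),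
      (∀ α : (R × maximalIdeal R) ≃ₗ[R] (R × maximalIdeal R),
        ((δ α).1 : ResidueField R) = residue R (α (1, 0)).1) ∧
      (∀ (α : (R × maximalIdeal R) ≃ₗ[R] (R × maximalIdeal R)) (x : maximalIdeal R),
        (((δ α).2 x : R))
          = (α (((α (0, x)).2 : R), 0)).1 - ((α ((α (0, x)).1, 0)).2 : R)) ∧
      Function.Surjective δ ∧
      δ.ker = commutator ((R × maximalIdeal R) ≃ₗ[R] (R × maximalIdeal R)) :=
  stmt_11_general h2 hm hcomm
end

section
/- Let (R, m, k) be a commutative local ring with 2 a unit, m not isomorphic to R, and End_R(m) commutative and local. For every r ∈ 1 + m, the automorphism of R ⊕ m given by the diagonal matrix diag(r·1_R, r⁻¹·1_m) lies in the commutator subgroup of Aut_R(R ⊕ m). -/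
/-!
Multiplying by a unit `u` on one factor of `M × N` conjugates the shear `(x, y) ↦ (x + f y, y)`
into `(x, y) ↦ (x + u f y, y)`, so the commutator of the two is the shear by `(u - 1) f`. Taking
`u = 2` shows that every shear of either factor is a commutator once `2` is a unit. For an ideal
`I` and a unit `r ≡ 1 mod I`, Whitehead's identity
`diag(r, r⁻¹) = e₂₁(r⁻¹ - 1) e₁₂(ι) e₂₁(r - 1) e₁₂(-r⁻¹ ι)` on `R × I`, with `ι : I → R` the
inclusion, writes `diag(r, r⁻¹)` as a product of shears.
-/

open scoped commutatorElement

namespace LinearEquiv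

section Ring

variable {R M N : Type*} [Ring R] [AddCommGroup M] [Module R M] [AddCommGroup N] [Module R N]

def shearFst (f : N →ₗ[R] M) : (M × N) ≃ₗ[R] (M × N) where
  toFun p := (p.1 + f p.2, p.2)
  invFun p := (p.1 - f p.2, p.2)
  map_add' p q := by ext <;> simp only [Prod.fst_add, Prod.snd_add, map_add]; abel
  map_smul' c p := by ext <;> simp
  left_inv p := by simp
  right_inv p := by simp

def shearSnd (g : M →ₗ[R] N) : (M × N) ≃ₗ[R] (M × N) where
  toFun p := (p.1, p.2 + g p.1)
  invFun p := (p.1, p.2 - g p.1)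
  map_add' p q := by ext <;> simp only [Prod.fst_add, Prod.snd_add, map_add]; abel
  map_smul' c p := by ext <;> simp
  left_inv p := by simp
  right_inv p := by simp

@[simp] lemma shearFst_apply (f : N →ₗ[R] M) (p : M × N) : shearFst f p = (p.1 + f p.2, p.2) :=
  rfl

@[simp] lemma shearSnd_apply (g : M →ₗ[R] N) (p : M × N) : shearSnd g p = (p.1, p.2 + g p.1) :=
  rfl

@[simp] lemma shearFst_symm_apply (f : N →ₗ[R] M) (p : M × N) :
    (shearFst f).symm p = (p.1 - f p.2, p.2) :=
  rfl

@[simp] lemma shearSnd_symm_apply (g : M →ₗ[R] N) (p : M × N) :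
    (shearSnd g).symm p = (p.1, p.2 - g p.1) :=
  rfl

end Ring

section CommRing

variable {R M N : Type*} [CommRing R] [AddCommGroup M] [Module R M] [AddCommGroup N] [Module R N]

@[simp] lemma smulOfUnit_apply (u : Rˣ) (x : M) : smulOfUnit u x = u • x := rfl

@[simp] lemma smulOfUnit_symm_apply (u : Rˣ) (x : M) : (smulOfUnit u).symm x = u⁻¹ • x := rfl

lemma commutatorElement_prodCongr_smulOfUnit_shearFst (u : Rˣ) (f : N →ₗ[R] M) :
    ⁅(smulOfUnit u : M ≃ₗ[R] M).prodCongr (refl R N), shearFst f⁆ =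
      shearFst (((u : R) - 1) • f) := by
  ext p
  · simp only [commutatorElement_def, mul_apply, coe_inv, shearFst_symm_apply, prodCongr_symm,
      refl_symm, prodCongr_apply, smulOfUnit_symm_apply, refl_apply, shearFst_apply,
      smulOfUnit_apply, smul_add, smul_inv_smul, sub_smul, ← Units.smul_def, one_smul,
      LinearMap.sub_apply, LinearMap.smul_apply]
    abel
  · simp [commutatorElement_def]

lemma commutatorElement_prodCongr_smulOfUnit_shearSnd (u : Rˣ) (g : M →ₗ[R] N) :
    ⁅(refl R M).prodCongr (smulOfUnit u : N ≃ₗ[R] N), shearSnd g⁆ =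
      shearSnd (((u : R) - 1) • g) := by
  ext p
  · simp [commutatorElement_def]
  · simp only [commutatorElement_def, mul_apply, coe_inv, shearSnd_symm_apply, prodCongr_symm,
      refl_symm, prodCongr_apply, refl_apply, smulOfUnit_symm_apply, shearSnd_apply,
      smulOfUnit_apply, smul_add, smul_inv_smul, sub_smul, ← Units.smul_def, one_smul,
      LinearMap.sub_apply, LinearMap.smul_apply]
    abel

lemma _root_.IsUnit.unit_two_sub_one (h2 : IsUnit (2 : R)) : (h2.unit : R) - 1 = 1 := by
  rw [IsUnit.unit_spec]
  norm_num

lemma shearFst_mem_commutator (h2 : IsUnit (2 : R)) (f : N →ₗ[R] M) :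
    shearFst f ∈ commutator ((M × N) ≃ₗ[R] (M × N)) := by
  rw [← one_smul R f, ← h2.unit_two_sub_one,
    ← commutatorElement_prodCongr_smulOfUnit_shearFst, commutator_def]
  exact Subgroup.commutator_mem_commutator (Subgroup.mem_top _) (Subgroup.mem_top _)

lemma shearSnd_mem_commutator (h2 : IsUnit (2 : R)) (g : M →ₗ[R] N) :
    shearSnd g ∈ commutator ((M × N) ≃ₗ[R] (M × N)) := by
  rw [← one_smul R g, ← h2.unit_two_sub_one,
    ← commutatorElement_prodCongr_smulOfUnit_shearSnd, commutator_def]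
  exact Subgroup.commutator_mem_commutator (Subgroup.mem_top _) (Subgroup.mem_top _)

lemma _root_.Units.val_inv_sub_one_mem {I : Ideal R} {r : Rˣ} (hr : (r : R) - 1 ∈ I) :
    ((r⁻¹ : Rˣ) : R) - 1 ∈ I := by
  convert I.mul_mem_left (-((r⁻¹ : Rˣ) : R)) hr using 1
  linear_combination r.inv_mul

lemma prodCongr_smulOfUnit_eq_shears (I : Ideal R) (r : Rˣ) (hr : (r : R) - 1 ∈ I) :
    (smulOfUnit r : R ≃ₗ[R] R).prodCongr (smulOfUnit r⁻¹ : I ≃ₗ[R] I) =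
      shearSnd (LinearMap.toSpanSingleton R I ⟨_, r.val_inv_sub_one_mem hr⟩) *
        shearFst I.subtype * shearSnd (LinearMap.toSpanSingleton R I ⟨_, hr⟩) *
        shearFst (-((r⁻¹ : Rˣ) : R) • I.subtype) := by
  have hv : ((r⁻¹ : Rˣ) : R) * r = 1 := r.inv_mul
  ext p
  · simp only [prodCongr_apply, smulOfUnit_apply, Units.smul_def, smul_eq_mul, mul_apply,
      shearFst_apply, LinearMap.smul_apply, Submodule.subtype_apply, neg_mul, shearSnd_apply,
      LinearMap.toSpanSingleton_apply, SetLike.mk_smul_mk, Submodule.coe_add]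
    linear_combination (p.2 : R) * hv
  · simp only [prodCongr_apply, smulOfUnit_apply, Units.smul_def, smul_eq_mul, SetLike.val_smul,
      mul_apply, shearFst_apply, LinearMap.smul_apply, Submodule.subtype_apply, neg_mul,
      shearSnd_apply, LinearMap.toSpanSingleton_apply, SetLike.mk_smul_mk, Submodule.coe_add]
    linear_combination (((r⁻¹ : Rˣ) : R) * p.2 - p.1) * hv

lemma prodCongr_smulOfUnit_mem_commutator (h2 : IsUnit (2 : R)) {I : Ideal R} {r : Rˣ}
    (hr : (r : R) - 1 ∈ I) :
    (smulOfUnit r : R ≃ₗ[R] R).prodCongr (smulOfUnit r⁻¹ : I ≃ₗ[R] I) ∈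
      commutator ((R × I) ≃ₗ[R] (R × I)) := by
  rw [prodCongr_smulOfUnit_eq_shears I r hr]
  exact mul_mem (mul_mem (mul_mem (shearSnd_mem_commutator h2 _) (shearFst_mem_commutator h2 _))
    (shearSnd_mem_commutator h2 _)) (shearFst_mem_commutator h2 _)

end CommRing

end LinearEquiv

open IsLocalRing

theorem stmt_12_general {R : Type*} [CommRing R] [IsLocalRing R]
    (h2 : IsUnit (2 : R))
    (r : R) (hr : r - 1 ∈ maximalIdeal R) (hu : IsUnit r)
    (e : (R × maximalIdeal R) ≃ₗ[R] (R × maximalIdeal R))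
    (he : ∀ p : R × maximalIdeal R,
      (e p).1 = r * p.1 ∧ ((e p).2 : R) = (↑hu.unit⁻¹ : R) * (p.2 : R)) :
    e ∈ commutator ((R × maximalIdeal R) ≃ₗ[R] (R × maximalIdeal R)) := by
  have he_diag : e = (LinearEquiv.smulOfUnit hu.unit : R ≃ₗ[R] R).prodCongr
      (LinearEquiv.smulOfUnit hu.unit⁻¹) := by
    ext p
    · exact (he p).1
    · exact (he p).2
  rw [he_diag]
  exact LinearEquiv.prodCongr_smulOfUnit_mem_commutator h2 hr

/-- Let `(R, m, k)` be a commutative local ring with `2` a unit, `m ≇ R`, and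
`End_R(m)` commutative and local. For every `r ∈ 1 + m` (a unit of `R`), the automorphism
`diag(r·1_R, r⁻¹·1_m)` of `R ⊕ m`, acting by `(x, y) ↦ (r x, r⁻¹ y)`, lies in the commutator
subgroup of `Aut_R(R ⊕ m)`. -/
theorem stmt_12 {R : Type*} [CommRing R] [IsLocalRing R]
    (h2 : IsUnit (2 : R))
    (hm : IsEmpty ((maximalIdeal R) ≃ₗ[R] R))
    (hcomm : ∀ f g : Module.End R (maximalIdeal R), f * g = g * f)
    [IsLocalRing (Module.End R (maximalIdeal R))]
    (r : R) (hr : r - 1 ∈ maximalIdeal R) (hu : IsUnit r)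
    (e : (R × maximalIdeal R) ≃ₗ[R] (R × maximalIdeal R))
    (he : ∀ p : R × maximalIdeal R,
      (e p).1 = r * p.1 ∧ ((e p).2 : R) = (↑hu.unit⁻¹ : R) * (p.2 : R)) :
    e ∈ commutator ((R × maximalIdeal R) ≃ₗ[R] (R × maximalIdeal R)) :=
  stmt_12_general h2 r hr hu e he
end

section
/- Let k be a field with char k ≠ 2 and let R = k[X]/(X²) with maximal ideal m = (X). For a ∈ k*, consider the automorphism ξ_a = diag(a⁻¹·1_R, a²·1_m) of R ⊕ m. The subgroup of Aut_R(R ⊕ m)_ab generated by the classes of all ξ_a (a ∈ k*) maps, under the isomorphism Aut_R(R ⊕ m)_ab ≅ k* × k* (given by (α_{ij}) ↦ ([α₁₁(1)], det)), onto the subgroup {(a⁻¹, a) : a ∈ k*}, and the quotient of k* × k* by this subgroup is isomorphic to k* via (b, a) ↦ ba. -/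
set_option synthInstance.maxHeartbeats 1000000
set_option maxHeartbeats 1000000

/-- The maximal ideal `m = (X)` of the dual numbers `R = k[X]/(X²)`. -/
def dualMax (k : Type*) [Field k] : Ideal (DualNumber k) :=
  Ideal.span {(DualNumber.eps : DualNumber k)}

/-- The automorphism group `Aut_R(R ⊕ m)` for `R = k[X]/(X²)`, `m = (X)`. -/
abbrev dualAut (k : Type*) [Field k] :=
  (DualNumber k × dualMax k) ≃ₗ[DualNumber k] (DualNumber k × dualMax k)

/-- The set of classes in `Aut_R(R ⊕ m)_ab` of the automorphisms
`ξ_a = diag(a⁻¹·1_R, a²·1_m)`, for `a ∈ k*`. -/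
def xiSet (k : Type*) [Field k] : Set (Abelianization (dualAut k)) :=
  {gg | ∃ (a : kˣ) (α : dualAut k),
    (∀ (x : DualNumber k) (y : dualMax k),
      (α (x, y)).1 = TrivSqZeroExt.inl ((a : k)⁻¹) * x ∧
      ((α (x, y)).2 : DualNumber k) = TrivSqZeroExt.inl ((a : k) ^ 2) * (y : DualNumber k)) ∧
    gg = Abelianization.of α}

/-!
Each `ξ_a` is diagonal, so its residue is `a⁻¹` and its determinant, read off on the generator
`ε` of `m`, is `a⁻¹ · a² = a`; hence the classes of the `ξ_a` map exactly onto
`{(a⁻¹, a)}`, which is the kernel of the surjective multiplication map `k* × k* → k*`.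
-/

section KerMul

variable {G : Type*} [CommGroup G]

theorem coe_ker_mulMonoidHom :
    ((mulMonoidHom : G × G →* G).ker : Set (G × G)) = {p | ∃ a : G, p = (a⁻¹, a)} := by
  ext p
  refine ⟨fun h => ⟨p.2, Prod.ext (eq_inv_of_mul_eq_one_left h) rfl⟩, ?_⟩
  rintro ⟨a, rfl⟩
  exact inv_mul_cancel a

theorem mulMonoidHom_surjective : Function.Surjective (mulMonoidHom : G × G →* G) :=
  fun c => ⟨(c, 1), mul_one c⟩

end KerMul

namespace DualAut

open TrivSqZeroExt

variable {k : Type*} [Field k]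

def IsXi (a : kˣ) (α : dualAut k) : Prop :=
  ∀ (x : DualNumber k) (y : dualMax k),
    (α (x, y)).1 = inl ((a : k)⁻¹) * x ∧
      ((α (x, y)).2 : DualNumber k) = inl ((a : k) ^ 2) * (y : DualNumber k)

theorem mem_xiSet_iff {g : Abelianization (dualAut k)} :
    g ∈ xiSet k ↔ ∃ (a : kˣ) (α : dualAut k), IsXi a α ∧ g = Abelianization.of α :=
  Iff.rfl

noncomputable def xi (a : kˣ) : dualAut k :=
  (LinearEquiv.smulOfUnit (Units.map (inlHom k k : k →* DualNumber k) a⁻¹)).prodCongr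
    (LinearEquiv.smulOfUnit (Units.map (inlHom k k : k →* DualNumber k) (a ^ 2)))

theorem isXi_xi (a : kˣ) : IsXi a (xi a) := fun x y =>
  ⟨show (_ : (DualNumber k)ˣ) • x = _ by simp [Units.smul_def],
    show ((_ : (DualNumber k)ˣ) • y : DualNumber k) = _ by simp [Units.smul_def]⟩

theorem IsXi.eq_of_residue_of_det {a : kˣ} {α : dualAut k} (hα : IsXi a α) {p : kˣ × kˣ}
    (hres : (p.1 : k) = fst ((α (1, 0)).1))
    (hdet : ∀ x : dualMax k, inl (p.2 : k) * (x : DualNumber k)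
      = (α ((α (0, x)).2, 0)).1 - ((α ((α (0, x)).1, 0)).2 : DualNumber k)) :
    p = (a⁻¹, a) := by
  have hfst : (p.1 : k) = (a : k)⁻¹ := by simp [hres, (hα 1 0).1]
  let ε' : dualMax k := ⟨DualNumber.eps, Ideal.subset_span rfl⟩
  have hε : inl (p.2 : k) * DualNumber.eps
      = inl ((a : k)⁻¹) * (inl ((a : k) ^ 2) * DualNumber.eps) := by
    simpa [ε', (hα 0 ε').1, (hα 0 ε').2, (hα _ 0).1, Prod.mk_zero_zero] using hdet ε'
  have hsnd : (p.2 : k) = (a : k)⁻¹ * (a : k) ^ 2 := by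
    simpa using congrArg snd hε
  ext
  · simpa using hfst
  · simp [hsnd, pow_two]

end DualAut

open DualAut in
theorem stmt_17_general {k : Type*} [Field k]
    (ω : Abelianization (dualAut k) ≃* kˣ × kˣ)
    (hω : ∀ α : dualAut k,
      (((ω (Abelianization.of α)).1 : k) = TrivSqZeroExt.fst ((α (1, 0)).1)) ∧
      (∀ x : dualMax k,
        TrivSqZeroExt.inl (((ω (Abelianization.of α)).2 : k)) * (x : DualNumber k)
          = (α (((α (0, x)).2 : DualNumber k), 0)).1
            - ((α ((α (0, x)).1, 0)).2 : DualNumber k))) :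
    ((Subgroup.map ω.toMonoidHom (Subgroup.closure (xiSet k)) : Subgroup (kˣ × kˣ)) :
        Set (kˣ × kˣ)) = {p : kˣ × kˣ | ∃ a : kˣ, p = (a⁻¹, a)} ∧
    ∃ q : ((kˣ × kˣ) ⧸ Subgroup.map ω.toMonoidHom (Subgroup.closure (xiSet k))) ≃* kˣ,
      ∀ p : kˣ × kˣ, q (QuotientGroup.mk p) = p.1 * p.2 := by
  have himage : ω.toMonoidHom '' xiSet k = {p : kˣ × kˣ | ∃ a : kˣ, p = (a⁻¹, a)} := by
    ext p
    constructor
    · rintro ⟨_, ⟨a, α, hα, rfl⟩, rfl⟩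
      exact ⟨a, IsXi.eq_of_residue_of_det hα (hω α).1 (hω α).2⟩
    · rintro ⟨a, rfl⟩
      exact ⟨_, mem_xiSet_iff.2 ⟨a, xi a, isXi_xi a, rfl⟩,
        (isXi_xi a).eq_of_residue_of_det (hω _).1 (hω _).2⟩
  have hker : Subgroup.map ω.toMonoidHom (Subgroup.closure (xiSet k)) = mulMonoidHom.ker := by
    rw [MonoidHom.map_closure, himage, ← coe_ker_mulMonoidHom, Subgroup.closure_eq]
  rw [hker, coe_ker_mulMonoidHom]
  exact ⟨rfl, QuotientGroup.quotientKerEquivOfSurjective _ mulMonoidHom_surjective, fun _ => rfl⟩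

/-- Let `k` be a field with `char k ≠ 2`, `R = k[X]/(X²)` with maximal ideal
`m = (X)`. Under any isomorphism `ω : Aut_R(R ⊕ m)_ab ≅ k* × k*` given by
`(α_{ij}) ↦ ([α₁₁(1)], det)` (first component: residue of `α₁₁(1)`, i.e. its constant term;
second component: the scalar in `k` representing `α₁₁α₂₂ − α₂₁α₁₂ ∈ End_R(m) ≅ k`), the
subgroup of `Aut_R(R ⊕ m)_ab` generated by the classes of `ξ_a = diag(a⁻¹·1_R, a²·1_m)`
(`a ∈ k*`) maps onto the subgroup `{(a⁻¹, a) : a ∈ k*}`, and the quotient of `k* × k*` by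
this subgroup is isomorphic to `k*` via `(b, a) ↦ ba`. -/
theorem stmt_17 {k : Type*} [Field k] (hchar : (2 : k) ≠ 0)
    (ω : Abelianization (dualAut k) ≃* kˣ × kˣ)
    (hω : ∀ α : dualAut k,
      (((ω (Abelianization.of α)).1 : k) = TrivSqZeroExt.fst ((α (1, 0)).1)) ∧
      (∀ x : dualMax k,
        TrivSqZeroExt.inl (((ω (Abelianization.of α)).2 : k)) * (x : DualNumber k)
          = (α (((α (0, x)).2 : DualNumber k), 0)).1
            - ((α ((α (0, x)).1, 0)).2 : DualNumber k))) :
    ((Subgroup.map ω.toMonoidHom (Subgroup.closure (xiSet k)) : Subgroup (kˣ × kˣ)) :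
        Set (kˣ × kˣ)) = {p : kˣ × kˣ | ∃ a : kˣ, p = (a⁻¹, a)} ∧
    ∃ q : ((kˣ × kˣ) ⧸ Subgroup.map ω.toMonoidHom (Subgroup.closure (xiSet k))) ≃* kˣ,
      ∀ p : kˣ × kˣ, q (QuotientGroup.mk p) = p.1 * p.2 :=
  stmt_17_general ω hω
end
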